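/- Semantics of clauses with answer literals, propositional version: Let F : β → Prop, and suppose the formula ∀ y, (¬ F y ∨ ans y) together with assumptions A₁,…,Aₙ entails C ∨ ans r for every interpretation of the fresh predicate ans, where C does not mention ans. Then A₁ ∧ … ∧ Aₙ → (C ∨ F r). Concretely in Lean: if for every predicate ans : β → Prop, ((∀ y, ¬ F y ∨ ans y) ∧ A) → (C ∨ ans r), then A → (C ∨ F r). -/
import Mathlib


theorem stmt_15 {β : Type*} (F : β → Prop) (A C : Prop) (r : β)
    (h : ∀ ans : β → Prop, ((∀ y, ¬ F y ∨ ans y) ∧ A) → (C ∨ ans r)) :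
    A → (C ∨ F r) := fun hA => h F ⟨fun y => em (F y) |>.symm.imp id id, hA⟩
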